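/- Every finitely generated residually finite group is Hopfian: every surjective group endomorphism is an automorphism. -/

import Mathlib

/-!
A homomorphism from a finitely generated group is determined by the images of finitely many
generators, so there are only finitely many homomorphisms into a finite group `Q`. Precomposition
with a surjective endomorphism `f` is injective on this finite set, hence bijective; thus every
`φ : G →* Q` factors through `f` and kills `ker f`. Residual finiteness then forces `ker f = ⊥`.
-/

instance MonoidHom.finite_of_fg {G M : Type*} [Group G] [Group.FG G] [Monoid M] [Finite M] :
    Finite (G →* M) := by
  obtain ⟨s, hs⟩ := Group.fg_def.mp ‹_›
  refine Finite.of_injective (fun φ : G →* M => fun x : s => φ x) fun φ ψ h => ?_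
  exact MonoidHom.eq_of_eqOn_dense hs fun x hx => congrFun h ⟨x, hx⟩

theorem MonoidHom.ker_le_ker_of_surjective {G M : Type*} [Group G] [Group.FG G] [Monoid M]
    [Finite M] {f : G →* G} (hf : Function.Surjective f) (φ : G →* M) : f.ker ≤ φ.ker := by
  have hcomp : Function.Injective fun ψ : G →* M => ψ.comp f :=
    fun _ _ h => (MonoidHom.cancel_right hf).mp h
  obtain ⟨ψ, rfl⟩ := Finite.injective_iff_surjective.mp hcomp φ
  intro g hg
  rw [MonoidHom.mem_ker] at hg ⊢
  rw [MonoidHom.comp_apply, hg, map_one]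

/-- Every finitely generated residually finite group is Hopfian: every
surjective endomorphism is an automorphism. -/
theorem hopfian_of_fg_residuallyFinite {G : Type*} [Group G] (hfg : Group.FG G)
    (hrf : ∀ g : G, g ≠ 1 →
      ∃ N : Subgroup G, N.Normal ∧ Finite (G ⧸ N) ∧ g ∉ N)
    (f : G →* G) (hf : Function.Surjective f) :
    Function.Bijective f := by
  refine ⟨(MonoidHom.ker_eq_bot_iff f).mp ((Subgroup.eq_bot_iff_forall _).mpr fun g hg => ?_), hf⟩
  by_contra hg1
  obtain ⟨N, hN, hfin, hgN⟩ := hrf g hg1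
  have hker := MonoidHom.ker_le_ker_of_surjective hf (QuotientGroup.mk' N) hg
  exact hgN (by rwa [QuotientGroup.ker_mk'] at hker)
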